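/- Variation of the F-functional in the base point (the y-term of the first variation formula, Lemma 3.1 of the paper, with the submanifold and time parameter held fixed): let n be a natural number and let μ be a Borel measure on a finite-dimensional Euclidean space E with polynomial volume growth, i.e. there exist C > 0 and d ≥ 0 with μ(B(0,r)) ≤ C r^d for all r ≥ 1. Then for every fixed t₀ > 0, every x₀ ∈ E and every direction y ∈ E, the function s ↦ F^{(n)}_{x₀ + s y, t₀}(μ) is differentiable at s = 0 with derivative (4π t₀)^{−n/2} ∫_E ( ⟨x − x₀, y⟩ / (2 t₀) ) exp( −‖x − x₀‖² / (4 t₀) ) dμ(x). -/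

import Mathlib

/-!
Differentiate under the integral sign. The `s`-derivative of the Gaussian centred at
`x₀ + s • y` is `⟪x - x₀ - s • y, y⟫ / (2 t₀)` times that Gaussian, and for `|s| < 1` it is
dominated by a multiple of `exp (-‖x - x₀‖² / (16 t₀))`. Gaussians are integrable against `μ`:
on the unit-width annuli `k ≤ ‖x - x₀‖ < k + 1` the integrand is at most `exp (-k² / c)`, while
the annulus has measure at most `C (k + 1 + ‖x₀‖) ^ d`, and these products are summable.
-/

open MeasureTheory Real
open scoped RealInnerProductSpace ENNReal

/-- The (real-valued) `F`-functional with dimension parameter `n` of a Borel measure `μ`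
on a finite-dimensional Euclidean space `E`:
`F^{(n)}_{x₀,t₀}(μ) = (4π t₀)^{-n/2} ∫_E exp(-‖x-x₀‖²/(4t₀)) dμ(x)`. -/
noncomputable def FmeasR (n : ℕ) {E : Type*} [NormedAddCommGroup E] [InnerProductSpace ℝ E]
    [MeasurableSpace E] (μ : Measure E) (x₀ : E) (t₀ : ℝ) : ℝ :=
  (4 * Real.pi * t₀) ^ (-(n : ℝ) / 2) *
    ∫ x, Real.exp (-‖x - x₀‖ ^ 2 / (4 * t₀)) ∂μ

theorem lintegral_le_tsum_mul_measure_closedBall {E : Type*} [PseudoMetricSpace E]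
    [MeasurableSpace E] [OpensMeasurableSpace E] {μ : Measure E} {f : E → ℝ≥0∞} {g : ℕ → ℝ≥0∞}
    (x₀ : E) (hf : ∀ x, f x ≤ g ⌊dist x x₀⌋₊) :
    ∫⁻ x, f x ∂μ ≤ ∑' k : ℕ, g k * μ (Metric.closedBall x₀ (k + 1)) := by
  have hcover : ∀ x, f x ≤ ∑' k : ℕ, (Metric.closedBall x₀ (k + 1)).indicator (fun _ => g k) x :=
    fun x => (hf x).trans <| by
      refine le_of_eq_of_le ?_ (ENNReal.le_tsum ⌊dist x x₀⌋₊)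
      rw [Set.indicator_of_mem (Metric.mem_closedBall.mpr (Nat.lt_floor_add_one _).le)]
  calc ∫⁻ x, f x ∂μ
      ≤ ∫⁻ x, ∑' k : ℕ, (Metric.closedBall x₀ (k + 1)).indicator (fun _ => g k) x ∂μ :=
        lintegral_mono hcover
    _ = ∑' k : ℕ, g k * μ (Metric.closedBall x₀ (k + 1)) := by
        rw [lintegral_tsum fun k =>
          (measurable_const.indicator measurableSet_closedBall).aemeasurable]
        simp_rw [lintegral_indicator_const measurableSet_closedBall]

theorem summable_exp_neg_sq_div_mul_rpow {c a : ℝ} (hc : 0 < c) (ha : 1 ≤ a) (d : ℝ) :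
    Summable fun k : ℕ => exp (-(k : ℝ) ^ 2 / c) * ((k : ℝ) + a) ^ d := by
  set m := ⌈d⌉₊
  have hgeom : Summable fun k : ℕ => a ^ m * exp (1 / c) *
      (((k + 1 : ℕ) : ℝ) ^ m * exp (-(1 / c) * ((k + 1 : ℕ) : ℝ))) :=
    ((summable_nat_add_iff 1).mpr (summable_pow_mul_exp_neg_nat_mul m (by positivity))).mul_left _
  refine hgeom.of_nonneg_of_le (fun k => by positivity) fun k => ?_
  have hk : (0 : ℝ) ≤ k := k.cast_nonneg
  have hpow : ((k : ℝ) + a) ^ d ≤ a ^ m * ((k : ℝ) + 1) ^ m :=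
    calc ((k : ℝ) + a) ^ d ≤ ((k : ℝ) + a) ^ (m : ℝ) :=
          rpow_le_rpow_of_exponent_le (by linarith) (Nat.le_ceil d)
      _ = ((k : ℝ) + a) ^ m := rpow_natCast _ m
      _ ≤ (a * ((k : ℝ) + 1)) ^ m := pow_le_pow_left₀ (by linarith) (by nlinarith) m
      _ = a ^ m * ((k : ℝ) + 1) ^ m := mul_pow _ _ _
  have hexp : exp (-(k : ℝ) ^ 2 / c) ≤ exp (1 / c) * exp (-(1 / c) * ((k : ℝ) + 1)) := by
    have hk2 : (k : ℝ) ≤ (k : ℝ) ^ 2 := by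
      exact_mod_cast Nat.le_self_pow two_ne_zero k
    rw [← exp_add, exp_le_exp, show 1 / c + -(1 / c) * ((k : ℝ) + 1) = -(k : ℝ) / c by ring]
    gcongr
  push_cast
  calc exp (-(k : ℝ) ^ 2 / c) * ((k : ℝ) + a) ^ d
      ≤ (exp (1 / c) * exp (-(1 / c) * ((k : ℝ) + 1))) * (a ^ m * ((k : ℝ) + 1) ^ m) := by
        gcongr
    _ = _ := by ring

theorem integrable_exp_neg_norm_sub_sq_div {E : Type*} [NormedAddCommGroup E]
    [MeasurableSpace E] [BorelSpace E] {μ : Measure E} {C d : ℝ}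
    (hgrowth : ∀ r : ℝ, 1 ≤ r → μ (Metric.closedBall 0 r) ≤ ENNReal.ofReal (C * r ^ d))
    {c : ℝ} (hc : 0 < c) (x₀ : E) :
    Integrable (fun x => exp (-‖x - x₀‖ ^ 2 / c)) μ := by
  refine ⟨(by fun_prop : Continuous fun x : E => exp (-‖x - x₀‖ ^ 2 / c)).aestronglyMeasurable, ?_⟩
  have hball (k : ℕ) : μ (Metric.closedBall x₀ (k + 1)) ≤
      ENNReal.ofReal C * ENNReal.ofReal (((k : ℝ) + (1 + ‖x₀‖)) ^ d) := by
    rw [← ENNReal.ofReal_mul' (by positivity), ← add_assoc]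
    refine (measure_mono (Metric.closedBall_subset_closedBall' ?_)).trans (hgrowth _ ?_)
    · rw [dist_comm, dist_zero_left]
    · linarith [k.cast_nonneg (α := ℝ), norm_nonneg x₀]
  set g : ℕ → ℝ≥0∞ := fun k => ENNReal.ofReal (exp (-(k : ℝ) ^ 2 / c))
  have hdecay (x : E) : ‖exp (-‖x - x₀‖ ^ 2 / c)‖ₑ ≤ g ⌊dist x x₀⌋₊ := by
    rw [Real.enorm_eq_ofReal (exp_nonneg _)]
    refine ENNReal.ofReal_le_ofReal (exp_le_exp.mpr ?_)
    rw [← dist_eq_norm]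
    gcongr
    exact Nat.floor_le dist_nonneg
  refine (lintegral_le_tsum_mul_measure_closedBall x₀ hdecay).trans_lt ?_
  calc ∑' k : ℕ, g k * μ (Metric.closedBall x₀ (k + 1))
      ≤ ∑' k : ℕ, ENNReal.ofReal C *
          ENNReal.ofReal (exp (-(k : ℝ) ^ 2 / c) * ((k : ℝ) + (1 + ‖x₀‖)) ^ d) := by
        refine ENNReal.tsum_le_tsum fun k => ?_
        rw [ENNReal.ofReal_mul (exp_nonneg _), mul_left_comm]
        gcongr
        exact hball k
    _ < ⊤ := by
        rw [ENNReal.tsum_mul_left, ← ENNReal.ofReal_tsum_of_nonneg (fun k => by positivity)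
          (summable_exp_neg_sq_div_mul_rpow hc (by linarith [norm_nonneg x₀]) d)]
        exact ENNReal.mul_lt_top ENNReal.ofReal_lt_top ENNReal.ofReal_lt_top

theorem mul_exp_neg_sq_div_le_sqrt {c : ℝ} (hc : 0 < c) (r : ℝ) : r * exp (-r ^ 2 / c) ≤ √c := by
  have hsc : 0 < √c := sqrt_pos.mpr hc
  set u := r / √c
  have hr : r = √c * u := (mul_div_cancel₀ r hsc.ne').symm
  have hu : r ^ 2 / c = u ^ 2 := by rw [hr, mul_pow, sq_sqrt hc.le]; field_simp
  have hue : u ≤ exp (u ^ 2) := by nlinarith [add_one_le_exp (u ^ 2), sq_nonneg (u - 1)]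
  calc r * exp (-r ^ 2 / c) = √c * (u * exp (-u ^ 2)) := by rw [neg_div, hu, hr]; ring
    _ ≤ √c * (exp (u ^ 2) * exp (-u ^ 2)) := by gcongr
    _ = √c := by rw [← exp_add, add_neg_cancel, exp_zero, mul_one]

theorem exp_neg_norm_sq_div_le {E : Type*} [SeminormedAddCommGroup E] {c : ℝ} (hc : 0 < c)
    (u v : E) :
    exp (-‖u‖ ^ 2 / c) ≤ exp (‖v‖ ^ 2 / c) * exp (-‖u + v‖ ^ 2 / (2 * c)) := by
  have hsq : ‖u + v‖ ^ 2 ≤ 2 * ‖u‖ ^ 2 + 2 * ‖v‖ ^ 2 := by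
    nlinarith [norm_add_le u v, norm_nonneg (u + v), sq_nonneg (‖u‖ - ‖v‖)]
  have hdiff : ‖v‖ ^ 2 / c + -‖u + v‖ ^ 2 / (2 * c) - -‖u‖ ^ 2 / c =
      (2 * ‖u‖ ^ 2 + 2 * ‖v‖ ^ 2 - ‖u + v‖ ^ 2) / (2 * c) := by
    field_simp
    ring
  rw [← exp_add, exp_le_exp, ← sub_nonneg, hdiff]
  exact div_nonneg (by linarith) (by positivity)

section InnerProductSpace

variable {E : Type*} [NormedAddCommGroup E] [InnerProductSpace ℝ E]

theorem hasDerivAt_exp_neg_norm_sub_smul_sq (t : ℝ) (x x₀ y : E) (s : ℝ) :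
    HasDerivAt (fun s : ℝ => exp (-‖x - (x₀ + s • y)‖ ^ 2 / (4 * t)))
      (⟪x - (x₀ + s • y), y⟫ / (2 * t) * exp (-‖x - (x₀ + s • y)‖ ^ 2 / (4 * t))) s := by
  have hpath : HasDerivAt (fun s : ℝ => x - (x₀ + s • y)) (-y) s := by
    simpa using ((hasDerivAt_id s).smul_const y).const_add x₀ |>.const_sub x
  refine ((hpath.norm_sq.neg.div_const (4 * t)).exp).congr_deriv ?_
  rw [inner_neg_right, Pi.neg_apply]
  ring

theorem abs_inner_div_mul_exp_neg_le {t : ℝ} (ht : 0 < t) (x x₀ y : E) {s : ℝ} (hs : |s| ≤ 1) :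
    |⟪x - (x₀ + s • y), y⟫ / (2 * t) * exp (-‖x - (x₀ + s • y)‖ ^ 2 / (4 * t))| ≤
      ‖y‖ * √(8 * t) / (2 * t) * exp (‖y‖ ^ 2 / (8 * t)) * exp (-‖x - x₀‖ ^ 2 / (16 * t)) := by
  set w := x - (x₀ + s • y)
  have hsy : ‖s • y‖ ≤ ‖y‖ := by
    rw [norm_smul, norm_eq_abs]; exact mul_le_of_le_one_left (norm_nonneg y) hs
  have hsplit : exp (-‖w‖ ^ 2 / (4 * t)) =
      exp (-‖w‖ ^ 2 / (8 * t)) * exp (-‖w‖ ^ 2 / (8 * t)) := by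
    rw [← exp_add]; ring_nf
  have hshift : exp (-‖w‖ ^ 2 / (8 * t)) ≤
      exp (‖y‖ ^ 2 / (8 * t)) * exp (-‖x - x₀‖ ^ 2 / (16 * t)) := by
    have h := exp_neg_norm_sq_div_le (by positivity : 0 < 8 * t) w (s • y)
    rw [show w + s • y = x - x₀ by simp only [w]; abel, show 2 * (8 * t) = 16 * t by ring] at h
    exact h.trans (by gcongr)
  rw [abs_mul, abs_div, abs_of_pos (exp_pos _), abs_of_pos (by positivity : 0 < 2 * t)]
  calc |⟪w, y⟫| / (2 * t) * exp (-‖w‖ ^ 2 / (4 * t))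
      ≤ ‖w‖ * ‖y‖ / (2 * t) * exp (-‖w‖ ^ 2 / (4 * t)) := by
        gcongr
        exact abs_real_inner_le_norm w y
    _ = ‖y‖ / (2 * t) * (‖w‖ * exp (-‖w‖ ^ 2 / (8 * t))) * exp (-‖w‖ ^ 2 / (8 * t)) := by
        rw [hsplit]
        ring
    _ ≤ ‖y‖ / (2 * t) * √(8 * t) *
          (exp (‖y‖ ^ 2 / (8 * t)) * exp (-‖x - x₀‖ ^ 2 / (16 * t))) := by
        gcongr
        exact mul_exp_neg_sq_div_le_sqrt (by positivity) _
    _ = _ := by ring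

end InnerProductSpace

theorem F_basepoint_derivative_general (n : ℕ) {E : Type*} [NormedAddCommGroup E]
    [InnerProductSpace ℝ E] [MeasurableSpace E] [BorelSpace E]
    (μ : Measure E) (C d : ℝ)
    (hgrowth : ∀ r : ℝ, 1 ≤ r → μ (Metric.closedBall 0 r) ≤ ENNReal.ofReal (C * r ^ d))
    (t₀ : ℝ) (ht₀ : 0 < t₀) (x₀ y : E) :
    HasDerivAt (fun s : ℝ => FmeasR n μ (x₀ + s • y) t₀)
      ((4 * Real.pi * t₀) ^ (-(n : ℝ) / 2) *
        ∫ x, (⟪x - x₀, y⟫ / (2 * t₀)) * Real.exp (-‖x - x₀‖ ^ 2 / (4 * t₀)) ∂μ)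
      0 := by
  have hgauss {c : ℝ} (hc : 0 < c) := integrable_exp_neg_norm_sub_sq_div hgrowth hc x₀
  have hdiff := hasDerivAt_integral_of_dominated_loc_of_deriv_le (μ := μ)
    (Metric.ball_mem_nhds (0 : ℝ) one_pos)
    (F := fun s x => exp (-‖x - (x₀ + s • y)‖ ^ 2 / (4 * t₀)))
    (F' := fun s x =>
      ⟪x - (x₀ + s • y), y⟫ / (2 * t₀) * exp (-‖x - (x₀ + s • y)‖ ^ 2 / (4 * t₀)))
    (bound := fun x => ‖y‖ * √(8 * t₀) / (2 * t₀) * exp (‖y‖ ^ 2 / (8 * t₀)) *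
      exp (-‖x - x₀‖ ^ 2 / (16 * t₀)))
    (.of_forall fun s => (by fun_prop : Continuous _).aestronglyMeasurable)
    (by simpa using hgauss (by positivity : 0 < 4 * t₀))
    ((by fun_prop : Continuous _).aestronglyMeasurable)
    (.of_forall fun x s hs => abs_inner_div_mul_exp_neg_le ht₀ x x₀ y
      (by simpa using (Metric.mem_ball.mp hs).le))
    ((hgauss (by positivity : 0 < 16 * t₀)).const_mul _)
    (.of_forall fun x s _ => hasDerivAt_exp_neg_norm_sub_smul_sq t₀ x x₀ y s)
  simpa [FmeasR] using hdiff.2.const_mul ((4 * π * t₀) ^ (-(n : ℝ) / 2))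

/-- Variation of the `F`-functional in the base point: if `μ` has polynomial volume
growth, then for fixed `t₀ > 0`, `x₀ ∈ E` and direction `y ∈ E`, the function
`s ↦ F^{(n)}_{x₀ + s y, t₀}(μ)` is differentiable at `s = 0` with derivative
`(4π t₀)^{-n/2} ∫ (⟨x-x₀, y⟩/(2t₀)) exp(-‖x-x₀‖²/(4t₀)) dμ(x)`. -/
theorem F_basepoint_derivative (n : ℕ) {E : Type*} [NormedAddCommGroup E]
    [InnerProductSpace ℝ E] [FiniteDimensional ℝ E] [MeasurableSpace E] [BorelSpace E]
    (μ : Measure E) (C d : ℝ) (hC : 0 < C) (hd : 0 ≤ d)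
    (hgrowth : ∀ r : ℝ, 1 ≤ r → μ (Metric.closedBall 0 r) ≤ ENNReal.ofReal (C * r ^ d))
    (t₀ : ℝ) (ht₀ : 0 < t₀) (x₀ y : E) :
    HasDerivAt (fun s : ℝ => FmeasR n μ (x₀ + s • y) t₀)
      ((4 * Real.pi * t₀) ^ (-(n : ℝ) / 2) *
        ∫ x, (⟪x - x₀, y⟫ / (2 * t₀)) * Real.exp (-‖x - x₀‖ ^ 2 / (4 * t₀)) ∂μ)
      0 :=
  F_basepoint_derivative_general n μ C d hgrowth t₀ ht₀ x₀ y
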